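/- Let Γ be a finitely generated group of polynomial growth r with word-length function L, and let D be the (unbounded) multiplication operator by L on ℓ²(Γ). Then D is self-adjoint with compact resolvent, and (1 + D²)^{-p/2} is trace class for every p > r + 1. -/

import Mathlib

open ContinuousLinearMap
open scoped InnerProductSpace LinearPMap

/-- The word-length function on a group `Γ` relative to a generating set `S`. -/
noncomputable def wordLength {Γ : Type*} [Group Γ] (S : Set Γ) (g : Γ) : ℕ :=
  sInf {n | ∃ l : List Γ, l.length = n ∧ (∀ x ∈ l, x ∈ S) ∧ l.prod = g}

/-- The `m`-th singular value (approximation number) of an operator `T` on a Hilbert space. -/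
noncomputable def sv {H : Type*} [NormedAddCommGroup H] [InnerProductSpace ℂ H]
    (T : H →L[ℂ] H) (m : ℕ) : ℝ :=
  ⨅ F : {F : H →L[ℂ] H // FiniteDimensional ℂ (LinearMap.range (F : H →ₗ[ℂ] H)) ∧
          Module.finrank ℂ (LinearMap.range (F : H →ₗ[ℂ] H)) ≤ m}, ‖T - F.1‖

/-! `D` is diagonal in the standard basis of `ℓ²(Γ)` with real entries `L g`, so on its maximal
domain it is self-adjoint, and `(i - D)⁻¹`, `(1 + D²)^{-p/2}` are the multiplication operators by
`(i - L)⁻¹` and `(1 + L²)^{-p/2}`. Truncating such a multiplier to a ball `{L ≤ n}` gives an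
operator of rank at most `#{L ≤ n} ≤ C (1 + n)^r` whose distance to the original is the supremum of
the multiplier outside the ball. Since balls are finite, this makes `(i - D)⁻¹` a norm limit of
finite-rank operators, and it bounds the `m`-th singular value of `(1 + D²)^{-p/2}` by
`O(m^{-p/(r+1)})`, which is summable for `p > r + 1`. -/

open Filter Topology

theorem isCompactOperator_of_finiteDimensional_range {E : Type*} [NormedAddCommGroup E]
    [NormedSpace ℂ E] (T : E →L[ℂ] E) [FiniteDimensional ℂ (LinearMap.range (T : E →ₗ[ℂ] E))] :
    IsCompactOperator T :=
  (isCompactOperator_of_locallyCompactSpace_dom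
    (T.codRestrict _ (LinearMap.mem_range_self (T : E →ₗ[ℂ] E)))).continuous_comp
      continuous_subtype_val

theorem sv_le_norm_sub {H : Type*} [NormedAddCommGroup H] [InnerProductSpace ℂ H]
    (T F : H →L[ℂ] H) {m : ℕ} (hF : FiniteDimensional ℂ (LinearMap.range (F : H →ₗ[ℂ] H)))
    (hm : Module.finrank ℂ (LinearMap.range (F : H →ₗ[ℂ] H)) ≤ m) : sv T m ≤ ‖T - F‖ :=
  ciInf_le ⟨0, Set.forall_mem_range.mpr fun _ => norm_nonneg _⟩
    (⟨F, hF, hm⟩ : {F : H →L[ℂ] H // FiniteDimensional ℂ (LinearMap.range (F : H →ₗ[ℂ] H)) ∧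
          Module.finrank ℂ (LinearMap.range (F : H →ₗ[ℂ] H)) ≤ m})

theorem sv_nonneg {H : Type*} [NormedAddCommGroup H] [InnerProductSpace ℂ H]
    (T : H →L[ℂ] H) (m : ℕ) : 0 ≤ sv T m :=
  Real.iInf_nonneg fun _ => norm_nonneg _

theorem norm_inv_I_sub_ofReal_le_one (x : ℝ) : ‖(Complex.I - x)⁻¹‖ ≤ 1 := by
  rw [norm_inv]
  refine inv_le_one_of_one_le₀ ?_
  simpa using Complex.abs_im_le_norm (Complex.I - x)

theorem le_norm_I_sub_ofReal (x : ℝ) : x ≤ ‖Complex.I - x‖ :=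
  (le_abs_self x).trans <| by simpa using Complex.abs_re_le_norm (Complex.I - x)

theorem Filter.Tendsto.inv_I_sub_ofReal {α : Type*} {l : Filter α} {φ : α → ℝ}
    (h : Tendsto φ l atTop) : Tendsto (fun i => (Complex.I - φ i)⁻¹) l (𝓝 0) := by
  rw [tendsto_zero_iff_norm_tendsto_zero]
  simp only [norm_inv]
  exact (tendsto_atTop_mono (fun i => le_norm_I_sub_ofReal (φ i)) h).inv_tendsto_atTop

theorem tendsto_cofinite_atTop_of_finite_sublevel {ι : Type*} {φ : ι → ℝ}
    (h : ∀ k : ℕ, {i | φ i ≤ k}.Finite) : Tendsto φ cofinite atTop :=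
  tendsto_atTop.2 fun b => eventually_cofinite.2 <| (h ⌈b⌉₊).subset fun _ hi =>
    (le_of_lt (not_le.mp hi)).trans (Nat.le_ceil b)

theorem rpow_one_add_sq_neg_le {x y p : ℝ} (hx : 0 < x) (hxy : x ≤ y) (hp : 0 ≤ p) :
    (1 + y ^ 2) ^ (-(p / 2)) ≤ x ^ (-p) := calc
  (1 + y ^ 2) ^ (-(p / 2)) ≤ (x ^ 2) ^ (-(p / 2)) :=
    Real.rpow_le_rpow_of_nonpos (by positivity) (by nlinarith) (by linarith)
  _ = x ^ (-p) := by rw [← Real.rpow_two, ← Real.rpow_mul hx.le]; ring_nf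

theorem norm_ofReal_rpow_one_add_sq_neg_le_one (y : ℝ) {p : ℝ} (hp : 0 ≤ p) :
    ‖(((1 + y ^ 2) ^ (-(p / 2)) : ℝ) : ℂ)‖ ≤ 1 := by
  rw [Complex.norm_real, Real.norm_of_nonneg (by positivity)]
  exact Real.rpow_le_one_of_one_le_of_nonpos (by nlinarith) (by linarith)

theorem exists_nat_rpow_le {x C r : ℝ} (hC : 0 < C) (hr : 0 ≤ r) (hx : C ≤ x) :
    ∃ k : ℕ, 1 ≤ k ∧ C * (k : ℝ) ^ r ≤ x ∧ (x / C) ^ (r + 1)⁻¹ ≤ 2 * k := by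
  set t := (x / C) ^ (r + 1)⁻¹
  have ht : 1 ≤ t := Real.one_le_rpow ((one_le_div hC).mpr hx) (by positivity)
  have hk : (1 : ℝ) ≤ ⌊t⌋₊ := by exact_mod_cast Nat.le_floor (by simpa using ht)
  refine ⟨⌊t⌋₊, by exact_mod_cast hk, ?_, by linarith [Nat.lt_floor_add_one t]⟩
  calc C * (⌊t⌋₊ : ℝ) ^ r ≤ C * (⌊t⌋₊ : ℝ) ^ (r + 1) := by
        gcongr
        linarith
    _ ≤ C * t ^ (r + 1) := by gcongr; exact Nat.floor_le (zero_le_one.trans ht)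
    _ = x := by
        rw [← Real.rpow_mul (div_pos (hC.trans_le hx) hC).le, inv_mul_cancel₀ (by positivity),
          Real.rpow_one]
        field_simp

theorem summable_of_norm_le_rpow_neg_of_mul_rpow_le {σ : ℕ → ℝ} {r C p : ℝ} (hr : 0 ≤ r)
    (hC : 0 < C) (hp : r + 1 < p)
    (hσ : ∀ k m : ℕ, 1 ≤ k → C * (k : ℝ) ^ r ≤ m → ‖σ m‖ ≤ (k : ℝ) ^ (-p)) :
    Summable σ := by
  set q := p / (r + 1)
  have hq : 1 < q := (one_lt_div (by linarith)).mpr hp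
  refine Summable.of_norm_bounded_eventually_nat
    (g := fun m : ℕ => 2 ^ p * ((m : ℝ) ^ (-q) / C ^ (-q)))
    (((Real.summable_nat_rpow.mpr (by linarith)).div_const _).mul_left _) ?_
  filter_upwards [eventually_ge_atTop ⌈C⌉₊] with m hm
  have hCm : C ≤ m := Nat.ceil_le.mp hm
  obtain ⟨k, hk, hCk, htk⟩ := exists_nat_rpow_le hC hr hCm
  have hk0 : (0 : ℝ) < k := by exact_mod_cast hk
  calc ‖σ m‖ ≤ (k : ℝ) ^ (-p) := hσ k m hk hCk
    _ = 2 ^ p * (2 * k) ^ (-p) := by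
        rw [Real.mul_rpow (by norm_num) hk0.le, Real.rpow_neg (by norm_num : (0 : ℝ) ≤ 2),
          mul_inv_cancel_left₀ (by positivity)]
    _ ≤ 2 ^ p * (((m : ℝ) / C) ^ (r + 1)⁻¹) ^ (-p) := by
        exact mul_le_mul_of_nonneg_left (Real.rpow_le_rpow_of_nonpos
          (Real.rpow_pos_of_pos (div_pos (hC.trans_le hCm) hC) _) htk (by linarith)) (by positivity)
    _ = 2 ^ p * ((m : ℝ) ^ (-q) / C ^ (-q)) := by
        rw [← Real.rpow_mul (by positivity), Real.div_rpow (by positivity) hC.le]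
        congr 3 <;> ring

section MultiplicationOperators

variable {ι : Type*}

local notation "ℓ²" => lp (fun _ : ι => ℂ) 2

namespace lp

noncomputable def mulCLM (a : ι → ℂ) {K : ℝ} (hK : 0 ≤ K) (ha : ∀ i, ‖a i‖ ≤ K) : ℓ² →L[ℂ] ℓ² :=
  mapCLM 2 (fun i => ContinuousLinearMap.mul ℂ ℂ (a i)) hK
    fun i => (opNorm_mul_apply_le ℂ ℂ (a i)).trans (ha i)

variable {a : ι → ℂ} {K : ℝ} {hK : 0 ≤ K} {ha : ∀ i, ‖a i‖ ≤ K}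

@[simp]
theorem mulCLM_apply (f : ℓ²) (i : ι) : mulCLM a hK ha f i = a i * f i := rfl

theorem mulCLM_sub {b : ι → ℂ} {L : ℝ} {hL : 0 ≤ L} {hb : ∀ i, ‖b i‖ ≤ L} {M : ℝ} (hM : 0 ≤ M)
    (hab : ∀ i, ‖a i - b i‖ ≤ M) :
    mulCLM a hK ha - mulCLM b hL hb = mulCLM (a - b) hM hab := by
  ext f i
  simp [sub_mul]

theorem norm_mulCLM_le : ‖mulCLM a hK ha‖ ≤ K := norm_mapCLM_le _ _ _ _

theorem finiteDimensional_range_mulCLM_and_finrank_le (s : Finset ι) (hs : ∀ i ∉ s, a i = 0) :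
    FiniteDimensional ℂ (LinearMap.range (mulCLM a hK ha : ℓ² →ₗ[ℂ] ℓ²)) ∧
      Module.finrank ℂ (LinearMap.range (mulCLM a hK ha : ℓ² →ₗ[ℂ] ℓ²)) ≤ s.card := by
  let restrict : LinearMap.range (mulCLM a hK ha : ℓ² →ₗ[ℂ] ℓ²) →ₗ[ℂ] (s → ℂ) :=
    LinearMap.pi fun i => (evalₗ (fun _ : ι => ℂ) 2 (i : ι)).comp (Submodule.subtype _)
  have h : Function.Injective restrict := by
    rw [← LinearMap.ker_eq_bot, LinearMap.ker_eq_bot']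
    rintro ⟨_, f, rfl⟩ hf
    ext i
    by_cases hi : i ∈ s
    · exact congrFun hf ⟨i, hi⟩
    · simp [hs i hi]
  exact ⟨Module.Finite.of_injective restrict h,
    (LinearMap.finrank_le_finrank_of_injective h).trans (by simp)⟩

theorem exists_finiteDimensional_range_norm_mulCLM_sub_le (s : Finset ι) {b : ℝ} (hb : 0 ≤ b)
    (hs : ∀ i ∉ s, ‖a i‖ ≤ b) :
    ∃ F : ℓ² →L[ℂ] ℓ², FiniteDimensional ℂ (LinearMap.range (F : ℓ² →ₗ[ℂ] ℓ²)) ∧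
      Module.finrank ℂ (LinearMap.range (F : ℓ² →ₗ[ℂ] ℓ²)) ≤ s.card ∧
      ‖mulCLM a hK ha - F‖ ≤ b := by
  classical
  have hKs : ∀ i, ‖(s : Set ι).indicator a i‖ ≤ K :=
    fun i => (norm_indicator_le_norm_self a i).trans (ha i)
  obtain ⟨hfin, hrank⟩ := finiteDimensional_range_mulCLM_and_finrank_le (hK := hK) (ha := hKs) s
    fun i hi => Set.indicator_of_notMem (by simpa using hi) a
  refine ⟨_, hfin, hrank, ?_⟩
  rw [mulCLM_sub hb]
  · exact norm_mulCLM_le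
  · intro i
    by_cases hi : i ∈ s <;> simp [hi, hb, hs]

theorem sv_mulCLM_le {s : Finset ι} {m : ℕ} (hm : s.card ≤ m) {b : ℝ} (hb : 0 ≤ b)
    (hs : ∀ i ∉ s, ‖a i‖ ≤ b) : sv (mulCLM a hK ha) m ≤ b := by
  obtain ⟨F, hF, hrank, hnorm⟩ := exists_finiteDimensional_range_norm_mulCLM_sub_le s hb hs
  exact (sv_le_norm_sub _ F hF (hrank.trans hm)).trans hnorm

theorem isCompactOperator_mulCLM (h : Tendsto a cofinite (𝓝 0)) :
    IsCompactOperator (mulCLM a hK ha) := by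
  refine isClosed_setOfPred_isCompactOperator.closure_subset
    (Metric.mem_closure_iff.mpr fun ε hε => ?_)
  have hfin : {i | ¬ ‖a i‖ ≤ ε / 2}.Finite :=
    eventually_cofinite.mp (h.norm.eventually (ge_mem_nhds (by simpa using half_pos hε)))
  obtain ⟨F, hF, -, hnorm⟩ := exists_finiteDimensional_range_norm_mulCLM_sub_le (hK := hK)
    (ha := ha) hfin.toFinset (half_pos hε).le fun i hi => by simpa using hi
  exact ⟨F, isCompactOperator_of_finiteDimensional_range F, by rw [dist_eq_norm]; linarith⟩

end lp

theorem single_mem_domain_of_mul [DecidableEq ι] (φ : ι → ℝ) (D : ℓ² →ₗ.[ℂ] ℓ²)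
    (hdom : ∀ f : ℓ², f ∈ D.domain ↔ Memℓp (fun i => (φ i : ℂ) * f i) 2) (i : ι) (c : ℂ) :
    lp.single 2 i c ∈ D.domain := by
  rw [hdom]
  refine (memℓp_zero ((Set.finite_singleton i).subset fun j hj => ?_)).of_exponent_ge
    zero_le
  by_contra hji
  simp [Pi.single_eq_of_ne hji] at hj

theorem dense_domain_of_mul (φ : ι → ℝ) (D : ℓ² →ₗ.[ℂ] ℓ²)
    (hdom : ∀ f : ℓ², f ∈ D.domain ↔ Memℓp (fun i => (φ i : ℂ) * f i) 2) :
    Dense (D.domain : Set ℓ²) := by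
  classical
  exact fun f => mem_closure_of_tendsto (lp.hasSum_single (by norm_num) f) <| .of_forall fun _ =>
    Submodule.sum_mem _ fun i _ => single_mem_domain_of_mul φ D hdom i _

theorem isFormalAdjoint_self_of_mul (φ : ι → ℝ) (D : ℓ² →ₗ.[ℂ] ℓ²)
    (hact : ∀ f : D.domain, ∀ i, (D f : ∀ _ : ι, ℂ) i = (φ i : ℂ) * (f : ℓ²) i) :
    D.IsFormalAdjoint D := by
  intro x y
  rw [lp.inner_eq_tsum, lp.inner_eq_tsum]
  refine tsum_congr fun i => ?_
  simp only [RCLike.inner_apply, hact, map_mul, Complex.conj_ofReal]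
  ring

theorem adjoint_apply_of_mul (φ : ι → ℝ) (D : ℓ² →ₗ.[ℂ] ℓ²)
    (hdom : ∀ f : ℓ², f ∈ D.domain ↔ Memℓp (fun i => (φ i : ℂ) * f i) 2)
    (hact : ∀ f : D.domain, ∀ i, (D f : ∀ _ : ι, ℂ) i = (φ i : ℂ) * (f : ℓ²) i)
    (y : D†.domain) (i : ι) :
    (D† y : ∀ _ : ι, ℂ) i = (φ i : ℂ) * (y : ℓ²) i := by
  classical
  have h := LinearPMap.adjoint_isFormalAdjoint (dense_domain_of_mul φ D hdom) y
    ⟨lp.single 2 i 1, single_mem_domain_of_mul φ D hdom i 1⟩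
  rw [lp.inner_single_right, lp.inner_eq_tsum, tsum_eq_single i fun j hj => by
    simp [hact, Pi.single_eq_of_ne hj]] at h
  simpa [hact, mul_comm] using congrArg (starRingEnd ℂ) h

theorem isSelfAdjoint_of_mul (φ : ι → ℝ) (D : ℓ² →ₗ.[ℂ] ℓ²)
    (hdom : ∀ f : ℓ², f ∈ D.domain ↔ Memℓp (fun i => (φ i : ℂ) * f i) 2)
    (hact : ∀ f : D.domain, ∀ i, (D f : ∀ _ : ι, ℂ) i = (φ i : ℂ) * (f : ℓ²) i) :
    IsSelfAdjoint D := by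
  have hadj := adjoint_apply_of_mul φ D hdom hact
  refine LinearPMap.isSelfAdjoint_def.mpr (le_antisymm ?_
    ((isFormalAdjoint_self_of_mul φ D hact).le_adjoint (dense_domain_of_mul φ D hdom)))
  constructor
  · intro y hy
    rw [hdom, ← funext (hadj ⟨y, hy⟩)]
    exact lp.memℓp _
  · intro x y hxy
    ext i
    rw [hadj x i, hact y i, hxy]

theorem exists_isCompactOperator_resolvent_of_mul (φ : ι → ℝ) (D : ℓ² →ₗ.[ℂ] ℓ²)
    (hact : ∀ f : D.domain, ∀ i, (D f : ∀ _ : ι, ℂ) i = (φ i : ℂ) * (f : ℓ²) i)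
    (hφ : Tendsto φ cofinite atTop) :
    ∃ R : ℓ² →L[ℂ] ℓ², IsCompactOperator R ∧
      ∀ f : D.domain, R (Complex.I • (f : ℓ²) - D f) = f := by
  refine ⟨lp.mulCLM (fun i => (Complex.I - φ i)⁻¹) zero_le_one
    (fun i => norm_inv_I_sub_ofReal_le_one _), lp.isCompactOperator_mulCLM hφ.inv_I_sub_ofReal,
    fun f => ?_⟩
  ext i
  have hne : Complex.I - φ i ≠ 0 := fun h => by simpa using congrArg Complex.im h
  rw [lp.mulCLM_apply, lp.coeFn_sub, Pi.sub_apply, lp.coeFn_smul, Pi.smul_apply, smul_eq_mul,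
    hact, ← sub_mul, inv_mul_cancel_left₀ hne]

theorem summable_sv_mulCLM_rpow_one_add_sq (ℓ : ι → ℕ) {r C p : ℝ} (hr : 0 ≤ r)
    (hC : 0 < C) (hp : r + 1 < p)
    (hgrowth : ∀ k : ℕ, {i | (ℓ i : ℝ) ≤ k}.Finite ∧
      (Nat.card {i | (ℓ i : ℝ) ≤ k} : ℝ) ≤ C * (1 + (k : ℝ)) ^ r)
    {K : ℝ} {hK : 0 ≤ K} {ha : ∀ i, ‖(((1 + (ℓ i : ℝ) ^ 2) ^ (-(p / 2)) : ℝ) : ℂ)‖ ≤ K} :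
    Summable fun m => sv (lp.mulCLM (fun i => (((1 + (ℓ i : ℝ) ^ 2) ^ (-(p / 2)) : ℝ) : ℂ))
      hK ha) m := by
  refine summable_of_norm_le_rpow_neg_of_mul_rpow_le hr hC hp fun k m hk hkm => ?_
  obtain ⟨n, rfl⟩ : ∃ n, k = n + 1 := ⟨k - 1, by omega⟩
  obtain ⟨hfin, hcard⟩ := hgrowth n
  rw [Real.norm_of_nonneg (sv_nonneg _ _)]
  refine lp.sv_mulCLM_le (s := hfin.toFinset) ?_ (by positivity) fun i hi => ?_
  · rw [← Nat.card_eq_card_finite_toFinset hfin, ← Nat.cast_le (α := ℝ)]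
    refine hcard.trans ?_
    rw [add_comm]
    exact_mod_cast hkm
  · have hni : (n + 1 : ℝ) ≤ ℓ i := by
      simp only [Set.Finite.mem_toFinset, Set.mem_ofPred_eq, not_le] at hi
      exact_mod_cast Nat.succ_le_of_lt (by exact_mod_cast hi)
    rw [Complex.norm_real, Real.norm_of_nonneg (by positivity)]
    exact_mod_cast rpow_one_add_sq_neg_le (by positivity) hni (by linarith)

end MultiplicationOperators

theorem multiplication_by_word_length_spectral_triple_general
    {Γ : Type*} [Group Γ] (S : Set Γ)
    (r C : ℝ) (hr : 0 ≤ r) (hC : 0 < C)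
    (hgrowth : ∀ k : ℕ, ({g : Γ | (wordLength S g : ℝ) ≤ k}).Finite ∧
      (Nat.card {g : Γ | (wordLength S g : ℝ) ≤ k} : ℝ) ≤ C * (1 + (k : ℝ)) ^ r)
    (D : lp (fun _ : Γ => ℂ) 2 →ₗ.[ℂ] lp (fun _ : Γ => ℂ) 2)
    (hdom : ∀ f : lp (fun _ : Γ => ℂ) 2,
      f ∈ D.domain ↔ Memℓp (fun g => (wordLength S g : ℂ) * f g) 2)
    (hact : ∀ f : D.domain, ∀ g : Γ,
      (D f : ∀ _ : Γ, ℂ) g = (wordLength S g : ℂ) * (f : lp (fun _ : Γ => ℂ) 2) g) :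
    IsSelfAdjoint D ∧
    (∃ R : lp (fun _ : Γ => ℂ) 2 →L[ℂ] lp (fun _ : Γ => ℂ) 2,
      IsCompactOperator R ∧
      ∀ f : D.domain,
        R (Complex.I • (f : lp (fun _ : Γ => ℂ) 2) - D f) = (f : lp (fun _ : Γ => ℂ) 2)) ∧
    (∀ p : ℝ, r + 1 < p →
      ∃ M : lp (fun _ : Γ => ℂ) 2 →L[ℂ] lp (fun _ : Γ => ℂ) 2,
        (∀ f : lp (fun _ : Γ => ℂ) 2, ∀ g : Γ,
          (M f : ∀ _ : Γ, ℂ) g = (((1 + (wordLength S g : ℝ) ^ 2) ^ (-(p / 2)) : ℝ) : ℂ) * f g) ∧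
        Summable (fun m => sv M m)) := by
  have hdom' : ∀ f : lp (fun _ : Γ => ℂ) 2,
      f ∈ D.domain ↔ Memℓp (fun g => ((wordLength S g : ℝ) : ℂ) * f g) 2 := by
    simpa using hdom
  have hact' : ∀ f : D.domain, ∀ g : Γ,
      (D f : ∀ _ : Γ, ℂ) g = ((wordLength S g : ℝ) : ℂ) * (f : lp (fun _ : Γ => ℂ) 2) g := by
    simpa using hact
  refine ⟨isSelfAdjoint_of_mul _ D hdom' hact',
    exists_isCompactOperator_resolvent_of_mul _ D hact'
      (tendsto_cofinite_atTop_of_finite_sublevel fun k => (hgrowth k).1),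
    fun p hp => ⟨lp.mulCLM _ zero_le_one fun g =>
      norm_ofReal_rpow_one_add_sq_neg_le_one _ (by linarith), fun f g => rfl,
      summable_sv_mulCLM_rpow_one_add_sq (wordLength S) hr hC hp hgrowth⟩⟩

/-- Let `Γ` be a finitely generated group of polynomial growth `r` with
word-length function `L`, and let `D` be the (unbounded) operator of multiplication by `L` on
`ℓ²(Γ)` (with its natural maximal domain).  Then `D` is self-adjoint, has compact resolvent
(`(i - D)⁻¹` is a compact operator), and `(1 + D²)^{-p/2}` — the operator of multiplication by
`(1 + L(g)²)^{-p/2}` — is trace class for every `p > r + 1`. -/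
theorem multiplication_by_word_length_spectral_triple
    {Γ : Type*} [Group Γ] (S : Set Γ) (hSfin : S.Finite) (hSsymm : S⁻¹ = S)
    (hSgen : Subgroup.closure S = ⊤)
    (r C : ℝ) (hr : 0 ≤ r) (hC : 0 < C)
    (hgrowth : ∀ k : ℕ, ({g : Γ | (wordLength S g : ℝ) ≤ k}).Finite ∧
      (Nat.card {g : Γ | (wordLength S g : ℝ) ≤ k} : ℝ) ≤ C * (1 + (k : ℝ)) ^ r)
    (D : lp (fun _ : Γ => ℂ) 2 →ₗ.[ℂ] lp (fun _ : Γ => ℂ) 2)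
    (hdom : ∀ f : lp (fun _ : Γ => ℂ) 2,
      f ∈ D.domain ↔ Memℓp (fun g => (wordLength S g : ℂ) * f g) 2)
    (hact : ∀ f : D.domain, ∀ g : Γ,
      (D f : ∀ _ : Γ, ℂ) g = (wordLength S g : ℂ) * (f : lp (fun _ : Γ => ℂ) 2) g) :
    IsSelfAdjoint D ∧
    (∃ R : lp (fun _ : Γ => ℂ) 2 →L[ℂ] lp (fun _ : Γ => ℂ) 2,
      IsCompactOperator R ∧
      ∀ f : D.domain,
        R (Complex.I • (f : lp (fun _ : Γ => ℂ) 2) - D f) = (f : lp (fun _ : Γ => ℂ) 2)) ∧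
    (∀ p : ℝ, r + 1 < p →
      ∃ M : lp (fun _ : Γ => ℂ) 2 →L[ℂ] lp (fun _ : Γ => ℂ) 2,
        (∀ f : lp (fun _ : Γ => ℂ) 2, ∀ g : Γ,
          (M f : ∀ _ : Γ, ℂ) g = (((1 + (wordLength S g : ℝ) ^ 2) ^ (-(p / 2)) : ℝ) : ℂ) * f g) ∧
        Summable (fun m => sv M m)) :=
  multiplication_by_word_length_spectral_triple_general S r C hr hC hgrowth D hdom hact
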